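/- arXiv:0812.2553 — 3 statements merged into one kernel-verified Lean document; each statement's English description precedes it below -/
import Mathlib

section
/- (Theorem 2) Let p ≥ 1 be an odd integer and let s be an even integer with 0 ≤ s < p. Then Σ_{v=0}^{p} C(p,v) C(p−v+1, s) E_v = −C(p,s) E_{p−s}, where E_v denotes the v-th Euler number and C(n,k) the binomial coefficient (with C(n,k) = 0 when k > n). -/
/-!
Pascal's rule `C(p-v+1, s) = C(p-v, s) + C(p-v, s-1)` splits the sum in two, and the identity
`C(p,v) C(p-v,t) = C(p,t) C(p-t,v)` turns each half into `C(p,t)` times the defining recurrence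
of `E_{p-t}`. This gives `-C(p,s) E_{p-s} - C(p,s-1) E_{p-s+1}`, and the second term vanishes
because `p-s+1` is even: the generating function `E(x) = 2/(eˣ+1)` satisfies `E(x) + E(-x) = 2`.
-/

open Finset

/-- The Euler numbers `E_n`, defined by `E_0 = 1` and the recurrence
`∑_{l=0}^{n} C(n,l) E_l + E_n = 0` for `n ≥ 1`. -/
def eulerNumber : ℕ → ℚ
  | 0 => 1
  | n + 1 => -(∑ l : Fin (n + 1), ((n + 1).choose l : ℚ) * eulerNumber l) / 2

/-- The Euler polynomials `E_n(x) = ∑_{l=0}^{n} C(n,l) E_l x^{n-l}`. -/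
noncomputable def eulerPoly (n : ℕ) (x : ℝ) : ℝ :=
  ∑ l ∈ Finset.range (n + 1), (n.choose l : ℝ) * (eulerNumber l : ℝ) * x ^ (n - l)

/-- The Euler function `Ē_p(x) = (-1)^⌊x⌋ E_p(x - ⌊x⌋)`. -/
noncomputable def eulerFun (p : ℕ) (x : ℝ) : ℝ := (-1 : ℝ) ^ ⌊x⌋ * eulerPoly p (x - ⌊x⌋)

/-- The Dedekind-type DC sum `T_p(h,k) = 2 ∑_{u=1}^{k-1} (-1)^{u-1} (u/k) Ē_p(hu/k)`. -/
noncomputable def dcSum (p h k : ℕ) : ℝ :=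
  2 * ∑ u ∈ Finset.Ico 1 k, (-1 : ℝ) ^ (u - 1) * ((u : ℝ) / k) * eulerFun p (h * u / k)

open PowerSeries

theorem sum_range_choose_mul_eulerNumber {n : ℕ} (hn : n ≠ 0) :
    ∑ l ∈ range (n + 1), (n.choose l : ℚ) * eulerNumber l = -eulerNumber n := by
  obtain ⟨m, rfl⟩ := Nat.exists_eq_succ_of_ne_zero hn
  rw [sum_range_succ,
    ← Fin.sum_univ_eq_sum_range (fun l => ((m + 1).choose l : ℚ) * eulerNumber l), eulerNumber,
    Nat.choose_self]
  push_cast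
  ring

noncomputable def eulerNumberPowerSeries : ℚ⟦X⟧ :=
  mk fun n => eulerNumber n / n.factorial

theorem eulerNumberPowerSeries_mul_exp_add_one :
    eulerNumberPowerSeries * (exp ℚ + 1) = 2 := by
  ext n
  rcases eq_or_ne n 0 with rfl | hn
  · simp [eulerNumberPowerSeries, eulerNumber, map_ofNat, one_add_one_eq_two]
  have h2 : coeff n (2 : ℚ⟦X⟧) = 0 := by
    rw [← map_ofNat (C (R := ℚ)) 2, coeff_C, if_neg hn]
  rw [mul_add, mul_one, map_add, h2, coeff_mul, Finset.Nat.sum_antidiagonal_eq_sum_range_succ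
    (fun i j => coeff i eulerNumberPowerSeries * coeff j (exp ℚ))]
  have hterm : ∀ i ∈ range (n + 1), coeff i eulerNumberPowerSeries * coeff (n - i) (exp ℚ) =
      (n.choose i : ℚ) * eulerNumber i / n.factorial := by
    intro i hi
    rw [Nat.cast_choose ℚ (Nat.lt_succ_iff.mp (mem_range.mp hi)), eulerNumberPowerSeries,
      coeff_mk, coeff_exp, Algebra.algebraMap_self, RingHom.id_apply]
    field_simp
  rw [sum_congr rfl hterm, ← sum_div, sum_range_choose_mul_eulerNumber hn, eulerNumberPowerSeries,
    coeff_mk]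
  ring

theorem eulerNumberPowerSeries_add_evalNegHom :
    eulerNumberPowerSeries + evalNegHom eulerNumberPowerSeries = 2 := by
  have hexp : exp ℚ + 1 ≠ 0 := fun h => by
    simpa using congrArg constantCoeff h
  have h := eulerNumberPowerSeries_mul_exp_add_one
  have hneg := congrArg evalNegHom h
  rw [map_mul, map_add, map_one, map_ofNat] at hneg
  apply mul_right_cancel₀ hexp
  -- `E(-x) (e⁻ˣ + 1) = 2` multiplied by `eˣ` reads `E(-x) (eˣ + 1) = 2 eˣ`
  linear_combination
    h + exp ℚ * hneg - evalNegHom eulerNumberPowerSeries * exp_mul_exp_neg_eq_one (A := ℚ)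

theorem eulerNumber_eq_zero_of_even {n : ℕ} (hn : n ≠ 0) (h : Even n) : eulerNumber n = 0 := by
  have := congrArg (coeff n) eulerNumberPowerSeries_add_evalNegHom
  rw [← map_ofNat (C (R := ℚ)) 2, coeff_C, if_neg hn] at this
  simpa [eulerNumberPowerSeries, evalNegHom, h.neg_one_pow, Nat.factorial_ne_zero] using this

theorem Nat.choose_mul_choose_sub_eq (n k l : ℕ) :
    n.choose k * (n - k).choose l = n.choose (k + l) * (k + l).choose k := by
  rcases le_or_gt (k + l) n with h | h
  · simpa using (Nat.choose_mul (n := n) (Nat.le_add_right k l)).symm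
  · rcases le_or_gt k n with hk | hk
    · simp [Nat.choose_eq_zero_of_lt h, Nat.choose_eq_zero_of_lt (show n - k < l by omega)]
    · simp [Nat.choose_eq_zero_of_lt h, Nat.choose_eq_zero_of_lt hk]

theorem Nat.choose_mul_choose_sub_comm (n k l : ℕ) :
    n.choose k * (n - k).choose l = n.choose l * (n - l).choose k := by
  rw [Nat.choose_mul_choose_sub_eq, Nat.choose_mul_choose_sub_eq, add_comm l, Nat.choose_symm_add]

theorem sum_choose_mul_choose_sub_mul_eulerNumber {p t : ℕ} (ht : t < p) :
    ∑ v ∈ range (p + 1), (p.choose v : ℚ) * ((p - v).choose t : ℚ) * eulerNumber v =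
      -(p.choose t : ℚ) * eulerNumber (p - t) := by
  have hswap : ∀ v ∈ range (p + 1), (p.choose v : ℚ) * ((p - v).choose t : ℚ) * eulerNumber v =
      (p.choose t : ℚ) * (((p - t).choose v : ℚ) * eulerNumber v) := fun v _ => by
    rw [← mul_assoc, ← Nat.cast_mul, ← Nat.cast_mul, Nat.choose_mul_choose_sub_comm]
  have htrunc : ∑ v ∈ range (p + 1), ((p - t).choose v : ℚ) * eulerNumber v =
      ∑ v ∈ range (p - t + 1), ((p - t).choose v : ℚ) * eulerNumber v := by
    refine (sum_subset (range_subset_range.mpr (by omega)) fun v _ hv => ?_).symm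
    rw [Nat.choose_eq_zero_of_lt (by simpa using hv), Nat.cast_zero, zero_mul]
  rw [sum_congr rfl hswap, ← mul_sum, htrunc, sum_range_choose_mul_eulerNumber (by omega)]
  ring

theorem sum_choose_mul_choose_sub_add_one_mul_eulerNumber {p k : ℕ} (hk : k + 1 < p) :
    ∑ v ∈ range (p + 1), (p.choose v : ℚ) * ((p - v + 1).choose (k + 1) : ℚ) * eulerNumber v =
      -(p.choose k : ℚ) * eulerNumber (p - k) -
        (p.choose (k + 1) : ℚ) * eulerNumber (p - (k + 1)) := by
  simp_rw [Nat.choose_succ_succ', Nat.cast_add, mul_add, add_mul, sum_add_distrib]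
  rw [sum_choose_mul_choose_sub_mul_eulerNumber (by omega),
    sum_choose_mul_choose_sub_mul_eulerNumber hk]
  ring

theorem eulerNumber_sum_choose_general (p s : ℕ) (hpodd : Odd p)
    (hs : Even s) (hsp : s < p) :
    ∑ v ∈ Finset.range (p + 1),
        (p.choose v : ℚ) * ((p - v + 1).choose s : ℚ) * eulerNumber v =
      -(p.choose s : ℚ) * eulerNumber (p - s) := by
  rcases s with _ | k
  · simpa using sum_choose_mul_choose_sub_mul_eulerNumber hsp
  · have hk : Odd k := Nat.Even.sub_odd (by omega) hs odd_one
    rw [sum_choose_mul_choose_sub_add_one_mul_eulerNumber hsp,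
      eulerNumber_eq_zero_of_even (by omega) (Nat.Odd.sub_odd hpodd hk)]
    ring

/-- Theorem 2: for odd `p ≥ 1` and even `s` with `0 ≤ s < p`,
`∑_{v=0}^{p} C(p,v) C(p−v+1, s) E_v = −C(p,s) E_{p−s}`. -/
theorem eulerNumber_sum_choose (p s : ℕ) (hp : 1 ≤ p) (hpodd : Odd p)
    (hs : Even s) (hsp : s < p) :
    ∑ v ∈ Finset.range (p + 1),
        (p.choose v : ℚ) * ((p - v + 1).choose s : ℚ) * eulerNumber v =
      -(p.choose s : ℚ) * eulerNumber (p - s) :=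
  eulerNumber_sum_choose_general p s hpodd hs hsp
end

section
/- (Theorem 7) Let h and k be coprime odd positive integers and let p ≥ 1 be an integer. Then k^p Σ_{u=0}^{k−1} (−1)^{u−⌊hu/k⌋} Σ_{s=0}^{p} C(p,s) h^s E_s(u/k) E_{p−s}(h − ⌊hu/k⌋) = Σ_{s=0}^{p} C(p,s) (hk)^{p−s} E_s E_{p−s}(1), where E_s(x) is the s-th Euler polynomial, E_s = E_s(0) the s-th Euler number, and ⌊·⌋ the floor function. -/
open Finset

/-!
The Euler polynomials have exponential generating function `𝓔(t) e^{xt}`, where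
`𝓔(t) (e^t + 1) = 2`. After scaling, the `u`-th summand on the left is `p!` times the `p`-th
coefficient of `𝓔(hkt) 𝓔(kt) e^{(hk + r)t}` with `r = hu mod k`; since `h` and `k` are odd its
sign is `(-1)^r`, and since they are coprime `r` runs over all residues mod `k` with `u`. The
multiplication formula `∑_{r<k} (-1)^r 𝓔(kt) e^{(y+r)t} = 𝓔(t) e^{yt}` (for odd `k`) then
collapses the left side to `𝓔(hkt) 𝓔(t) e^{hkt}`, which is the generating function of the right
side.
-/

open PowerSeries
open scoped Nat

section ExponentialGeneratingFunction

variable {K : Type*} [Field K]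

noncomputable def egf (a : ℕ → K) : K⟦X⟧ := mk fun n => a n / n !

theorem coeff_egf (a : ℕ → K) (n : ℕ) : coeff n (egf a) = a n / n ! := coeff_mk _ _

theorem factorial_mul_coeff_egf [CharZero K] (a : ℕ → K) (n : ℕ) :
    n ! * coeff n (egf a) = a n := by
  rw [coeff_egf, mul_div_cancel₀ _ (Nat.cast_ne_zero.2 n.factorial_ne_zero)]

theorem egf_mul [CharZero K] (a b : ℕ → K) :
    egf a * egf b = egf fun n => ∑ l ∈ range (n + 1), (n.choose l : K) * a l * b (n - l) := by
  ext n
  rw [coeff_mul, Finset.Nat.sum_antidiagonal_eq_sum_range_succ_mk, coeff_egf, sum_div]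
  refine sum_congr rfl fun l hl => ?_
  rw [coeff_egf, coeff_egf, Nat.cast_choose K (mem_range_succ_iff.1 hl)]
  have : (n ! : K) ≠ 0 := Nat.cast_ne_zero.2 n.factorial_ne_zero
  field_simp

theorem sum_choose_mul_eq_factorial_mul_coeff_egf_mul [CharZero K] (a b : ℕ → K) (n : ℕ) :
    ∑ l ∈ range (n + 1), (n.choose l : K) * a l * b (n - l) = n ! * coeff n (egf a * egf b) := by
  rw [egf_mul, factorial_mul_coeff_egf]

theorem egf_pow [CharZero K] (x : K) : egf (x ^ ·) = rescale x (exp K) := by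
  ext n
  simp [coeff_egf, coeff_exp, div_eq_mul_inv]

theorem rescale_egf (c : K) (a : ℕ → K) : rescale c (egf a) = egf fun n => c ^ n * a n := by
  ext n
  simp [coeff_egf, mul_div_assoc]

end ExponentialGeneratingFunction

theorem Finset.sum_range_mul_mod {M : Type*} [AddCommMonoid M] {h k : ℕ} (hcop : h.Coprime k)
    (f : ℕ → M) : ∑ u ∈ range k, f (h * u % k) = ∑ v ∈ range k, f v := by
  rcases k.eq_zero_or_pos with rfl | hk
  · simp
  have hmaps : Set.MapsTo (fun u => h * u % k) (range k) (range k) := fun u _ =>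
    mem_range.2 (Nat.mod_lt _ hk)
  have hinj : Set.InjOn (fun u => h * u % k) (range k) := fun u hu v hv huv => by
    have := Nat.ModEq.cancel_left_of_coprime hcop.symm huv
    rwa [Nat.ModEq, Nat.mod_eq_of_lt (mem_range.1 hu), Nat.mod_eq_of_lt (mem_range.1 hv)] at this
  exact sum_nbij _ hmaps hinj (surjOn_of_injOn_of_card_le _ hmaps hinj le_rfl) fun _ _ => rfl

theorem neg_one_zpow_sub_div_eq_neg_one_pow_mod {R : Type*} [DivisionRing R] {h k : ℕ}
    (hh : Odd h) (hk : Odd k) (u : ℕ) :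
    (-1 : R) ^ ((u : ℤ) - (h * u / k : ℕ)) = (-1) ^ (h * u % k) := by
  rw [← Int.cast_negOnePow, ← Int.cast_negOnePow_natCast]
  congr 2
  rw [Int.negOnePow_eq_iff]
  obtain ⟨a, rfl⟩ := hh
  obtain ⟨b, rfl⟩ := hk
  have hdiv := Nat.div_add_mod ((2 * a + 1) * u) (2 * b + 1)
  generalize (2 * a + 1) * u / (2 * b + 1) = q at hdiv ⊢
  generalize (2 * a + 1) * u % (2 * b + 1) = r at hdiv ⊢
  have hdiv' : ((2 * b + 1) * q + r : ℤ) = (2 * a + 1) * u := by exact_mod_cast hdiv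
  exact ⟨b * q - a * u, by linear_combination -hdiv'⟩

noncomputable def eulerSeries : ℝ⟦X⟧ := egf fun n => (eulerNumber n : ℝ)

theorem sum_choose_mul_eulerNumber_add_eulerNumber (n : ℕ) :
    ∑ l ∈ range (n + 1), (n.choose l : ℚ) * eulerNumber l + eulerNumber n =
      if n = 0 then 2 else 0 := by
  cases n with
  | zero => norm_num [eulerNumber]
  | succ m =>
    rw [sum_range_succ, Nat.choose_self, ← Fin.sum_univ_eq_sum_range, eulerNumber]
    simp only [Nat.cast_one, one_mul, if_neg m.succ_ne_zero]
    ring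

theorem eulerSeries_mul_exp_add_one : eulerSeries * (exp ℝ + 1) = 2 := by
  have hexp : exp ℝ = egf fun _ => 1 := by
    simpa using (egf_pow (1 : ℝ)).symm
  rw [hexp, mul_add, mul_one, eulerSeries, egf_mul]
  ext n
  have hrec := congrArg ((↑) : ℚ → ℝ) (sum_choose_mul_eulerNumber_add_eulerNumber n)
  push_cast at hrec
  simp only [mul_one]
  rw [map_add, coeff_egf, coeff_egf, ← add_div, hrec, ← map_ofNat C 2, coeff_C]
  split_ifs with hn
  · simp [hn]
  · simp

theorem egf_eulerPoly (x : ℝ) : egf (eulerPoly · x) = eulerSeries * rescale x (exp ℝ) := by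
  rw [eulerSeries, ← egf_pow, egf_mul]
  rfl

theorem egf_pow_mul_eulerPoly (c x : ℝ) :
    egf (fun n => c ^ n * eulerPoly n x) = rescale c eulerSeries * rescale (c * x) (exp ℝ) := by
  rw [← rescale_egf, egf_eulerPoly, map_mul, rescale_rescale, mul_comm x c]

theorem pow_mul_sum_choose_mul_eulerPoly_mul_eulerPoly (p : ℕ) (a c x y : ℝ) :
    c ^ p * ∑ s ∈ range (p + 1), (p.choose s : ℝ) * a ^ s * eulerPoly s x * eulerPoly (p - s) y =
      p ! * coeff p (rescale (a * c) eulerSeries * rescale c eulerSeries *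
        rescale (a * c * x + c * y) (exp ℝ)) := by
  have hsplit : c ^ p * ∑ s ∈ range (p + 1),
      (p.choose s : ℝ) * a ^ s * eulerPoly s x * eulerPoly (p - s) y =
      ∑ s ∈ range (p + 1), (p.choose s : ℝ) * ((a * c) ^ s * eulerPoly s x) *
        (c ^ (p - s) * eulerPoly (p - s) y) := by
    rw [mul_sum]
    refine sum_congr rfl fun s hs => ?_
    rw [mul_pow, ← pow_mul_pow_sub c (mem_range_succ_iff.1 hs)]
    ring
  rw [hsplit, sum_choose_mul_eq_factorial_mul_coeff_egf_mul (fun n => (a * c) ^ n * eulerPoly n x)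
    (fun n => c ^ n * eulerPoly n y), egf_pow_mul_eulerPoly, egf_pow_mul_eulerPoly,
    ← exp_mul_exp_eq_exp_add, mul_mul_mul_comm]

/-- The multiplication formula `∑_{v<k} (-1)^v k^n E_n((y+v)/k) = E_n(y)` for odd `k`, on
exponential generating functions. -/
theorem sum_neg_one_pow_smul_rescale_eulerSeries_mul {k : ℕ} (hk : Odd k) (y : ℝ) :
    ∑ v ∈ range k, (-1 : ℝ) ^ v • (rescale (k : ℝ) eulerSeries * rescale (y + v) (exp ℝ)) =
      eulerSeries * rescale y (exp ℝ) := by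
  set z := exp ℝ
  -- Both sides become `2 e^{yt}` after multiplication by `e^t + 1`, a non-zero-divisor.
  have hgeom : (z + 1) * ∑ v ∈ range k, (-z) ^ v = z ^ k + 1 := by
    have := geom_sum_mul (-z) k
    rw [hk.neg_pow] at this
    linear_combination -this
  have hz : z + 1 ≠ 0 := fun h => by simpa [z] using congrArg constantCoeff h
  apply mul_left_cancel₀ hz
  calc (z + 1) * ∑ v ∈ range k, (-1 : ℝ) ^ v • (rescale (k : ℝ) eulerSeries * rescale (y + v) z)
      = rescale (k : ℝ) eulerSeries * rescale y z * ((z + 1) * ∑ v ∈ range k, (-z) ^ v) := by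
        rw [mul_sum, mul_sum, mul_sum]
        refine sum_congr rfl fun v _ => ?_
        rw [← exp_mul_exp_eq_exp_add, ← exp_pow_eq_rescale_exp, Algebra.smul_def, map_pow, map_neg,
          map_one, neg_pow z]
        ring
    _ = rescale (k : ℝ) (eulerSeries * (z + 1)) * rescale y z := by
        rw [hgeom, exp_pow_eq_rescale_exp, map_mul, map_add, map_one]
        ring
    _ = (z + 1) * (eulerSeries * rescale y z) := by
        rw [eulerSeries_mul_exp_add_one, map_ofNat, ← eulerSeries_mul_exp_add_one]
        ring

theorem dcSum_aux_identity_general (h k p : ℕ)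
    (hhodd : Odd h) (hkodd : Odd k) (hcop : Nat.Coprime h k) :
    (k : ℝ) ^ p *
        ∑ u ∈ Finset.range k,
          (-1 : ℝ) ^ ((u : ℤ) - (h * u / k : ℕ)) *
            ∑ s ∈ Finset.range (p + 1),
              (p.choose s : ℝ) * (h : ℝ) ^ s * eulerPoly s ((u : ℝ) / k) *
                eulerPoly (p - s) ((h : ℝ) - (h * u / k : ℕ)) =
      ∑ s ∈ Finset.range (p + 1),
        (p.choose s : ℝ) * ((h : ℝ) * k) ^ (p - s) * (eulerNumber s : ℝ) *
          eulerPoly (p - s) 1 := by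
  have hk0 : (k : ℝ) ≠ 0 := Nat.cast_ne_zero.2 hkodd.pos.ne'
  have harg (u : ℕ) :
      (h : ℝ) * k * (u / k) + k * (h - (h * u / k : ℕ)) = h * k + (h * u % k : ℕ) := by
    have hdiv : ((k * (h * u / k) + h * u % k : ℕ) : ℝ) = h * u := by
      exact_mod_cast Nat.div_add_mod (h * u) k
    push_cast at hdiv
    rw [mul_assoc, mul_div_cancel₀ (u : ℝ) hk0]
    linear_combination -hdiv
  set A := rescale ((h : ℝ) * k) eulerSeries * rescale (k : ℝ) eulerSeries
  calc _ = ∑ u ∈ range k, (-1 : ℝ) ^ (h * u % k) *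
        (p ! * coeff p (A * rescale (h * k + (h * u % k : ℕ) : ℝ) (exp ℝ))) := by
        rw [mul_sum]
        refine sum_congr rfl fun u _ => ?_
        rw [mul_left_comm, pow_mul_sum_choose_mul_eulerPoly_mul_eulerPoly, harg,
          neg_one_zpow_sub_div_eq_neg_one_pow_mod hhodd hkodd]
    _ = ∑ v ∈ range k, (-1 : ℝ) ^ v * (p ! * coeff p (A * rescale (h * k + v : ℝ) (exp ℝ))) :=
        sum_range_mul_mod hcop fun v =>
          (-1 : ℝ) ^ v * (p ! * coeff p (A * rescale (h * k + v : ℝ) (exp ℝ)))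
    _ = p ! * coeff p (rescale ((h : ℝ) * k) eulerSeries * ∑ v ∈ range k,
          (-1 : ℝ) ^ v • (rescale (k : ℝ) eulerSeries * rescale (h * k + v : ℝ) (exp ℝ))) := by
        rw [mul_sum, map_sum, mul_sum]
        refine sum_congr rfl fun v _ => ?_
        rw [mul_smul_comm, map_smul, smul_eq_mul, mul_assoc]
        ring
    _ = _ := by
        have hE := egf_pow_mul_eulerPoly ((h : ℝ) * k) 1
        rw [mul_one] at hE
        rw [sum_neg_one_pow_smul_rescale_eulerSeries_mul hkodd, mul_left_comm, ← hE, eulerSeries,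
          ← sum_choose_mul_eq_factorial_mul_coeff_egf_mul]
        refine sum_congr rfl fun s _ => ?_
        ring

/-- Theorem 7: for coprime odd positive `h, k` and `p ≥ 1`,
`k^p ∑_{u=0}^{k−1} (−1)^{u−⌊hu/k⌋} ∑_{s=0}^{p} C(p,s) h^s E_s(u/k) E_{p−s}(h − ⌊hu/k⌋)
  = ∑_{s=0}^{p} C(p,s) (hk)^{p−s} E_s E_{p−s}(1)`. -/
theorem dcSum_aux_identity (h k p : ℕ) (hh : 0 < h) (hk : 0 < k)
    (hhodd : Odd h) (hkodd : Odd k) (hcop : Nat.Coprime h k) (hp : 1 ≤ p) :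
    (k : ℝ) ^ p *
        ∑ u ∈ Finset.range k,
          (-1 : ℝ) ^ ((u : ℤ) - (h * u / k : ℕ)) *
            ∑ s ∈ Finset.range (p + 1),
              (p.choose s : ℝ) * (h : ℝ) ^ s * eulerPoly s ((u : ℝ) / k) *
                eulerPoly (p - s) ((h : ℝ) - (h * u / k : ℕ)) =
      ∑ s ∈ Finset.range (p + 1),
        (p.choose s : ℝ) * ((h : ℝ) * k) ^ (p - s) * (eulerNumber s : ℝ) *
          eulerPoly (p - s) 1 :=
  dcSum_aux_identity_general h k p hhodd hkodd hcop
end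

section
/- (Theorem 8) Let h and k be odd positive integers and let p ≥ 1 be an integer. Then k^p T_p(h, k) + h^p T_p(k, h) = 2 (hk)^{p−1} Σ_{u=0}^{k−1} Σ_{v=0}^{h−1} (−1)^{u+v−1} (uh + vk) Ē_p(u/k + v/h). -/
open Finset

/-!
The right-hand side splits along `uh + vk` into two halves exchanged by `h ↔ k`, and summing the
`h`-half over `v` first turns it into `k^p T_p(h,k)` by the multiplication theorem for odd `m`,
`m^p ∑_{v<m} (-1)^v Ē_p(x + v/m) = Ē_p(mx)`. Both sides of that theorem are antiperiodic in `x`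
with antiperiod `1/m`, so it suffices to check it on `[0, 1/m)`, where it is the same identity for
the Euler polynomials. For the polynomials the difference of the two sides is again
`1/m`-antiperiodic, and by induction on `p` (using `E_p' = p E_{p-1}`) it has zero derivative, so it
vanishes.
-/

open Function

namespace Function.Antiperiodic

theorem eq_zero_of_hasDerivAt_zero {𝕜 G : Type*} [RCLike 𝕜] [NormedAddCommGroup G]
    [NormedSpace 𝕜 G] {f : 𝕜 → G} {c : 𝕜} (hf : Antiperiodic f c)
    (hf' : ∀ x, HasDerivAt f 0 x) : f = 0 := by
  funext x
  have hconst : f (x + c) = f x :=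
    is_const_of_deriv_eq_zero (fun y => (hf' y).differentiableAt) (fun y => (hf' y).deriv) _ _
  rw [hf x, neg_eq_iff_add_eq_zero, ← two_smul 𝕜] at hconst
  exact (smul_eq_zero.mp hconst).resolve_left two_ne_zero

theorem eq_zero_of_forall_mem_Ico {α β : Type*} [AddCommGroup α] [LinearOrder α]
    [IsOrderedAddMonoid α] [Archimedean α] [Ring β] [NoZeroDivisors β] {f : α → β} {c : α}
    (hf : Antiperiodic f c) (hc : 0 < c) (h0 : ∀ x ∈ Set.Ico 0 c, f x = 0) : f = 0 := by
  funext x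
  obtain ⟨y, hy, hxy⟩ := (hf.mul hf).exists_mem_Ico₀ hc x
  simpa [h0 y hy] using hxy

end Function.Antiperiodic

theorem sum_range_neg_one_pow_mul_add {R : Type*} [CommRing R] (A : ℕ → R) (m : ℕ) :
    ∑ v ∈ range m, (-1) ^ v * (A (v + 1) + A v) = A 0 - (-1) ^ m * A m := by
  induction m with
  | zero => simp
  | succ m ih => rw [sum_range_succ, ih, pow_succ]; ring

theorem sum_neg_one_pow_add_inv_add {K R : Type*} [Field K] [CharZero K] [CommRing R]
    {m : ℕ} (hm : Odd m) (f : K → R) (x : K) :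
    ∑ v ∈ range m, (-1) ^ v * f (x + (m : K)⁻¹ + v / m) +
      ∑ v ∈ range m, (-1) ^ v * f (x + v / m) = f x + f (x + 1) := by
  have hm0 : (m : K) ≠ 0 := by exact_mod_cast hm.pos.ne'
  have hshift (v : ℕ) : x + (m : K)⁻¹ + v / m = x + (v + 1 : ℕ) / m := by
    push_cast; field_simp; ring
  have := sum_range_neg_one_pow_mul_add (fun v => f (x + v / m)) m
  simp only [Nat.cast_zero, zero_div, add_zero, div_self hm0, hm.neg_one_pow] at this
  simp only [hshift, ← sum_add_distrib, ← mul_add, this]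
  ring

theorem eulerNumber_succ_eq (n : ℕ) :
    (eulerNumber (n + 1) : ℝ) =
      -(∑ l ∈ range (n + 1), ((n + 1).choose l : ℝ) * eulerNumber l) / 2 := by
  rw [eulerNumber,
    ← Fin.sum_univ_eq_sum_range (fun l => ((n + 1).choose l : ℝ) * eulerNumber l)]
  push_cast
  rfl

theorem eulerPoly_zero (x : ℝ) : eulerPoly 0 x = 1 := by
  simp [eulerPoly, eulerNumber]

theorem eulerPoly_apply_zero (n : ℕ) : eulerPoly n 0 = eulerNumber n := by
  rw [eulerPoly, sum_eq_single_of_mem n (self_mem_range_succ n)]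
  · simp
  · intro l hl hln
    rw [zero_pow (by grind), mul_zero]

theorem eulerPoly_succ_apply_one (n : ℕ) : eulerPoly (n + 1) 1 = -eulerNumber (n + 1) := by
  rw [eulerPoly, sum_range_succ, eulerNumber_succ_eq]
  simp only [one_pow, mul_one, Nat.choose_self, Nat.cast_one, one_mul]
  ring

theorem hasDerivAt_eulerPoly (n : ℕ) (x : ℝ) :
    HasDerivAt (eulerPoly (n + 1)) ((n + 1) * eulerPoly n x) x := by
  have hterm := fun l (_ : l ∈ range (n + 2)) =>
    ((hasDerivAt_pow (n + 1 - l) x).const_mul (((n + 1).choose l : ℝ) * eulerNumber l))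
  refine (HasDerivAt.fun_sum hterm :).congr_deriv ?_
  rw [sum_range_succ, Nat.sub_self, Nat.cast_zero, zero_mul, mul_zero, add_zero, eulerPoly, mul_sum]
  refine sum_congr rfl fun l _ => ?_
  have hchoose : (n.choose l : ℝ) * (n + 1) = (n + 1).choose l * (n + 1 - l : ℕ) := by
    exact_mod_cast Nat.choose_mul_succ_eq n l
  rw [show n + 1 - l - 1 = n - l by omega]
  linear_combination -(eulerNumber l * x ^ (n - l) : ℝ) * hchoose

theorem eulerPoly_add_one_add (n : ℕ) (x : ℝ) :
    eulerPoly n (x + 1) + eulerPoly n x = 2 * x ^ n := by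
  induction n generalizing x with
  | zero => norm_num [eulerPoly_zero]
  | succ n ih =>
    set D : ℝ → ℝ := fun y =>
      eulerPoly (n + 1) (y + 1) + eulerPoly (n + 1) y - 2 * y ^ (n + 1)
    have hD (y : ℝ) : HasDerivAt D 0 y := by
      have hsum := (((hasDerivAt_eulerPoly n (y + 1)).comp_add_const y 1).add
        (hasDerivAt_eulerPoly n y)).sub ((hasDerivAt_pow (n + 1) y).const_mul 2)
      refine hsum.congr_deriv ?_
      push_cast
      linear_combination (n + 1 : ℝ) * ih y
    have hconst : D x = D 0 :=
      is_const_of_deriv_eq_zero (fun y => (hD y).differentiableAt) (fun y => (hD y).deriv) x 0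
    simp only [D, zero_add, eulerPoly_succ_apply_one, eulerPoly_apply_zero] at hconst
    linear_combination hconst

theorem eulerPoly_mul_of_odd {m : ℕ} (hm : Odd m) (p : ℕ) (x : ℝ) :
    (m : ℝ) ^ p * ∑ v ∈ range m, (-1) ^ v * eulerPoly p (x + v / m) =
      eulerPoly p (m * x) := by
  have hm0 : (m : ℝ) ≠ 0 := by exact_mod_cast hm.pos.ne'
  set D : ℕ → ℝ → ℝ := fun p y =>
    (m : ℝ) ^ p * ∑ v ∈ range m, (-1) ^ v * eulerPoly p (y + v / m) - eulerPoly p (m * y)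
  have hanti (p : ℕ) : Antiperiodic (D p) (m : ℝ)⁻¹ := by
    intro y
    have hmy : (m : ℝ) * (y + (m : ℝ)⁻¹) = m * y + 1 := by field_simp
    simp only [D, hmy]
    linear_combination (m : ℝ) ^ p * sum_neg_one_pow_add_inv_add hm (eulerPoly p) y
      + (m : ℝ) ^ p * eulerPoly_add_one_add p y - eulerPoly_add_one_add p (m * y)
  have hderiv (p : ℕ) (y : ℝ) : HasDerivAt (D (p + 1)) ((p + 1) * m * D p y) y := by
    have hsum := HasDerivAt.fun_sum (u := range m) fun v _ =>
      ((hasDerivAt_eulerPoly p (y + v / m)).comp_add_const y (v / m)).const_mul ((-1 : ℝ) ^ v)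
    have hscaled := (hasDerivAt_eulerPoly p (m * y)).comp y ((hasDerivAt_id y).const_mul (m : ℝ))
    refine ((hsum.const_mul ((m : ℝ) ^ (p + 1))).sub hscaled).congr_deriv ?_
    simp only [D, mul_left_comm _ ((p : ℝ) + 1), ← mul_sum]
    ring
  suffices D p = 0 from sub_eq_zero.mp (congrFun this x)
  induction p with
  | zero => funext y; simp [D, eulerPoly_zero, neg_one_geom_sum, Nat.not_even_iff_odd.mpr hm]
  | succ p ih => exact (hanti _).eq_zero_of_hasDerivAt_zero fun y => by simpa [ih] using hderiv p y

theorem eulerFun_antiperiodic (p : ℕ) : Antiperiodic (eulerFun p) 1 := by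
  intro x
  simp only [eulerFun, Int.floor_add_one, Int.cast_add, Int.cast_one,
    zpow_add_one₀ (by norm_num : (-1 : ℝ) ≠ 0), add_sub_add_right_eq_sub]
  ring

theorem eulerFun_eq_eulerPoly (p : ℕ) {x : ℝ} (h0 : 0 ≤ x) (h1 : x < 1) :
    eulerFun p x = eulerPoly p x := by
  simp [eulerFun, Int.floor_eq_zero_iff.mpr ⟨h0, h1⟩]

theorem eulerFun_mul_of_odd {m : ℕ} (hm : Odd m) (p : ℕ) (x : ℝ) :
    (m : ℝ) ^ p * ∑ v ∈ range m, (-1) ^ v * eulerFun p (x + v / m) = eulerFun p (m * x) := by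
  have hm0 : (0 : ℝ) < m := by exact_mod_cast hm.pos
  set D : ℝ → ℝ := fun y =>
    (m : ℝ) ^ p * ∑ v ∈ range m, (-1) ^ v * eulerFun p (y + v / m) - eulerFun p (m * y)
  have hanti : Antiperiodic D (m : ℝ)⁻¹ := by
    intro y
    have hmy : (m : ℝ) * (y + (m : ℝ)⁻¹) = m * y + 1 := by field_simp
    have hS := sum_neg_one_pow_add_inv_add hm (eulerFun p) y
    rw [eulerFun_antiperiodic p y, add_neg_cancel] at hS
    simp only [D, hmy, eulerFun_antiperiodic p (m * y)]
    linear_combination (m : ℝ) ^ p * hS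
  have hIco : ∀ y ∈ Set.Ico 0 (m : ℝ)⁻¹, D y = 0 := by
    rintro y ⟨hy0, hy1⟩
    have hmy : (m : ℝ) * y < 1 := by
      simpa [mul_inv_cancel₀ hm0.ne'] using mul_lt_mul_of_pos_left hy1 hm0
    simp only [D, sub_eq_zero, eulerFun_eq_eulerPoly p (by positivity) hmy,
      ← eulerPoly_mul_of_odd hm p y]
    congr 1
    refine sum_congr rfl fun v hv => ?_
    have hv : (v : ℝ) + 1 ≤ m := by exact_mod_cast mem_range.mp hv
    rw [eulerFun_eq_eulerPoly p (by positivity)]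
    calc y + v / m < (m : ℝ)⁻¹ + v / m := by gcongr
      _ = (v + 1) / m := by ring
      _ ≤ 1 := (div_le_one hm0).mpr hv
  exact sub_eq_zero.mp (congrFun (hanti.eq_zero_of_forall_mem_Ico (inv_pos.mpr hm0) hIco) x)

theorem pow_mul_dcSum (h : ℕ) {k p : ℕ} (hk : 0 < k) (hp : 1 ≤ p) :
    (k : ℝ) ^ p * dcSum p h k =
      2 * (k : ℝ) ^ (p - 1) *
        ∑ u ∈ range k, (-1) ^ (u + 1) * (u : ℝ) * eulerFun p (h * u / k) := by
  obtain ⟨q, rfl⟩ : ∃ q, p = q + 1 := ⟨p - 1, by omega⟩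
  have hk0 : (k : ℝ) ≠ 0 := by exact_mod_cast hk.ne'
  rw [dcSum, range_eq_Ico, sum_eq_sum_Ico_succ_bot hk]
  simp only [Nat.cast_zero, mul_zero, zero_mul, zero_add, Nat.add_sub_cancel]
  rw [mul_left_comm, mul_sum, mul_sum, mul_sum]
  refine sum_congr rfl fun u hu => ?_
  obtain ⟨j, rfl⟩ : ∃ j, u = j + 1 := ⟨u - 1, by grind⟩
  rw [Nat.add_sub_cancel]
  field_simp
  ring

theorem pow_mul_dcSum_eq_double_sum {h k p : ℕ} (hh : Odd h) (hk : 0 < k) (hp : 1 ≤ p) :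
    (k : ℝ) ^ p * dcSum p h k =
      2 * ((h : ℝ) * k) ^ (p - 1) * ∑ u ∈ range k, ∑ v ∈ range h,
        (-1) ^ (u + v + 1) * ((u : ℝ) * h) * eulerFun p (u / k + v / h) := by
  obtain ⟨q, rfl⟩ : ∃ q, p = q + 1 := ⟨p - 1, by omega⟩
  have hh0 : (h : ℝ) ≠ 0 := by exact_mod_cast hh.pos.ne'
  have hinner (u : ℕ) :
      ∑ v ∈ range h, (-1) ^ (u + v + 1) * ((u : ℝ) * h) * eulerFun (q + 1) (u / k + v / h) =
        (-1) ^ (u + 1) * u * eulerFun (q + 1) (h * u / k) / (h : ℝ) ^ q := by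
    calc _ = (-1) ^ (u + 1) * u * h *
          ∑ v ∈ range h, (-1) ^ v * eulerFun (q + 1) (u / k + v / h) := by
          rw [mul_sum]
          exact sum_congr rfl fun v _ => by ring
      _ = _ := by
          rw [mul_div_assoc (h : ℝ), ← eulerFun_mul_of_odd hh]
          field_simp
          ring
  rw [pow_mul_dcSum h hk hp, Nat.add_sub_cancel]
  simp only [hinner, mul_sum, mul_pow]
  refine sum_congr rfl fun u _ => ?_
  field_simp

/-- Theorem 8: for odd positive `h, k` and `p ≥ 1`,
`k^p T_p(h,k) + h^p T_p(k,h)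
  = 2 (hk)^{p−1} ∑_{u=0}^{k−1} ∑_{v=0}^{h−1} (−1)^{u+v−1} (uh + vk) Ē_p(u/k + v/h)`. -/
theorem dcSum_reciprocity_aux (h k p : ℕ) (hh : 0 < h) (hk : 0 < k)
    (hhodd : Odd h) (hkodd : Odd k) (hp : 1 ≤ p) :
    (k : ℝ) ^ p * dcSum p h k + (h : ℝ) ^ p * dcSum p k h =
      2 * ((h : ℝ) * k) ^ (p - 1) *
        ∑ u ∈ Finset.range k, ∑ v ∈ Finset.range h,
          (-1 : ℝ) ^ (u + v + 1) * ((u : ℝ) * h + (v : ℝ) * k) *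
            eulerFun p ((u : ℝ) / k + (v : ℝ) / h) := by
  rw [pow_mul_dcSum_eq_double_sum hhodd hk hp, pow_mul_dcSum_eq_double_sum hkodd hh hp,
    sum_comm (s := range h), mul_comm (k : ℝ), ← mul_add, ← sum_add_distrib]
  refine congrArg _ (sum_congr rfl fun u _ => ?_)
  rw [← sum_add_distrib]
  refine sum_congr rfl fun v _ => ?_
  rw [add_comm ((v : ℝ) / h), add_comm v u]
  ring
end
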